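/- arXiv:1803.06517 — 4 statements merged into one kernel-verified Lean document; each statement's English description precedes it below -/
import Mathlib

section
/- Let τ̃(c) = (α_J c, 0, ..., 0, −α_1 c) ∈ ℝ^J for c > 0 and α ∈ ℝ_+^J. Then for every θ ∈ ℝ, as c → ∞, the GPCM probabilities satisfy π_J(θ, τ̃(c), α) → exp(A_J θ)/(1 + exp(A_J θ)), π_0(θ, τ̃(c), α) → 1/(1 + exp(A_J θ)), and π_j(θ, τ̃(c), α) → 0 for 0 < j < J, where A_J = Σ_{s=1}^J α_s. -/
open Real Filter Finset

noncomputable def gpcmPi (J : ℕ) (α τ : ℕ → ℝ) (θ : ℝ) (j : ℕ) : ℝ :=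
  Real.exp (∑ s ∈ Finset.Icc 1 j, α s * (θ - τ s)) /
    ∑ k ∈ Finset.Icc 0 J, Real.exp (∑ s ∈ Finset.Icc 1 k, α s * (θ - τ s))

/-- The threshold sequence `τ̃(c) = (α_J c, 0, ..., 0, −α_1 c)`. -/
noncomputable def tauTilde (J : ℕ) (α : ℕ → ℝ) (c : ℝ) (s : ℕ) : ℝ :=
  if s = 1 then α J * c else if s = J then -(α 1 * c) else 0

/-! Under `τ̃(c)` the cumulative logit `∑_{s ≤ k} α_s (θ - τ̃_s(c))` equals `A_k θ - α_1 α_J c`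
for `0 < k < J`, while for `k = J` the two extreme thresholds cancel and it equals `A_J θ`.
Hence, as `c → ∞`, the unnormalised category weights tend to `1, 0, …, 0, exp (A_J θ)`, and
the probabilities converge to these weights divided by their sum `1 + exp (A_J θ)`. -/

theorem tendsto_gpcmPi_of_tendsto_exp {ι : Type*} {l : Filter ι} {J : ℕ} {α : ℕ → ℝ}
    {τ : ι → ℕ → ℝ} {θ : ℝ} {L : ℕ → ℝ}
    (hL : ∀ k ≤ J, Tendsto (fun c => exp (∑ s ∈ Icc 1 k, α s * (θ - τ c s))) l (nhds (L k)))
    (hsum : ∑ k ∈ Icc 0 J, L k ≠ 0) {j : ℕ} (hj : j ≤ J) :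
    Tendsto (fun c => gpcmPi J α (τ c) θ j) l (nhds (L j / ∑ k ∈ Icc 0 J, L k)) :=
  (hL j hj).div (tendsto_finsetSum _ fun k hk => hL k (mem_Icc.1 hk).2) hsum

section TauTilde

variable {J : ℕ} {α : ℕ → ℝ} {θ : ℝ}

theorem sum_mul_sub_tauTilde_of_lt {k : ℕ} (hk : 0 < k) (hkJ : k < J) (c : ℝ) :
    ∑ s ∈ Icc 1 k, α s * (θ - tauTilde J α c s) = (∑ s ∈ Icc 1 k, α s) * θ - α 1 * α J * c := by
  have hterm : ∀ s ∈ Icc 1 k,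
      α s * (θ - tauTilde J α c s) = α s * θ - if s = 1 then α 1 * α J * c else 0 := by
    intro s hs
    have hsJ : s ≠ J := by grind
    by_cases hs1 : s = 1
    · subst hs1
      simp only [tauTilde, if_true]
      ring
    · simp [tauTilde, hs1, hsJ]
  rw [sum_congr rfl hterm, sum_sub_distrib, ← sum_mul, sum_ite_eq' (Icc 1 k) 1]
  simp [Nat.one_le_iff_ne_zero.2 hk.ne']

theorem sum_mul_sub_tauTilde_self (hJ : 2 ≤ J) (c : ℝ) :
    ∑ s ∈ Icc 1 J, α s * (θ - tauTilde J α c s) = (∑ s ∈ Icc 1 J, α s) * θ := by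
  obtain ⟨m, rfl⟩ : ∃ m, J = m + 1 := ⟨J - 1, by omega⟩
  have hτ : tauTilde (m + 1) α c (m + 1) = -(α 1 * c) := by
    simp [tauTilde, show m ≠ 0 by omega]
  rw [sum_Icc_succ_top (by omega), sum_Icc_succ_top (by omega) α,
    sum_mul_sub_tauTilde_of_lt (by omega) (by omega), hτ]
  ring

theorem tendsto_exp_sum_mul_sub_tauTilde_of_lt (hα : 0 < α 1 * α J) {k : ℕ} (hk : 0 < k)
    (hkJ : k < J) :
    Tendsto (fun c => exp (∑ s ∈ Icc 1 k, α s * (θ - tauTilde J α c s))) atTop (nhds 0) := by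
  simp_rw [sum_mul_sub_tauTilde_of_lt hk hkJ]
  refine tendsto_exp_atBot.comp (tendsto_atBot_add_const_left _ _ ?_)
  exact tendsto_neg_atBot_iff.2 (tendsto_id.const_mul_atTop hα)

noncomputable def tauTildeLimitWeight (J : ℕ) (a : ℝ) (k : ℕ) : ℝ :=
  if k = 0 then 1 else if k = J then exp a else 0

theorem sum_tauTildeLimitWeight (hJ : 0 < J) (a : ℝ) :
    ∑ k ∈ Icc 0 J, tauTildeLimitWeight J a k = 1 + exp a := by
  rw [sum_eq_add 0 J hJ.ne]
  · simp [tauTildeLimitWeight, hJ.ne']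
  · intro k _ hk
    simp [tauTildeLimitWeight, hk.1, hk.2]
  · simp
  · simp

theorem tendsto_exp_sum_mul_sub_tauTilde (hJ : 2 ≤ J) (hα : 0 < α 1 * α J) {k : ℕ} (hk : k ≤ J) :
    Tendsto (fun c => exp (∑ s ∈ Icc 1 k, α s * (θ - tauTilde J α c s))) atTop
      (nhds (tauTildeLimitWeight J ((∑ s ∈ Icc 1 J, α s) * θ) k)) := by
  rcases Nat.eq_zero_or_pos k with rfl | hk0
  · simp [tauTildeLimitWeight]
  rcases hk.eq_or_lt with rfl | hkJ
  · simp only [sum_mul_sub_tauTilde_self hJ, tauTildeLimitWeight, hk0.ne', if_false, if_true]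
    exact tendsto_const_nhds
  · simpa [tauTildeLimitWeight, hk0.ne', hkJ.ne] using
      tendsto_exp_sum_mul_sub_tauTilde_of_lt hα hk0 hkJ

end TauTilde

/-- As `c → ∞`, the GPCM probabilities under `τ̃(c)` converge to the 2PL probabilities:
`π_J → e^{A_J θ}/(1+e^{A_J θ})`, `π_0 → 1/(1+e^{A_J θ})`, and `π_j → 0` for `0 < j < J`. -/
theorem gpcm_tauTilde_limits (J : ℕ) (hJ : 2 ≤ J) (α : ℕ → ℝ) (hα : ∀ s, 0 < α s) (θ : ℝ) :
    Tendsto (fun c => gpcmPi J α (tauTilde J α c) θ J) atTop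
      (nhds (Real.exp ((∑ s ∈ Finset.Icc 1 J, α s) * θ)
        / (1 + Real.exp ((∑ s ∈ Finset.Icc 1 J, α s) * θ))))
    ∧ Tendsto (fun c => gpcmPi J α (tauTilde J α c) θ 0) atTop
        (nhds (1 / (1 + Real.exp ((∑ s ∈ Finset.Icc 1 J, α s) * θ))))
    ∧ ∀ j, 0 < j → j < J →
        Tendsto (fun c => gpcmPi J α (tauTilde J α c) θ j) atTop (nhds 0) := by
  set a := (∑ s ∈ Icc 1 J, α s) * θ
  have hsum := sum_tauTildeLimitWeight (by omega : 0 < J) a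
  have hlim : ∀ j ≤ J, Tendsto (fun c => gpcmPi J α (tauTilde J α c) θ j) atTop
      (nhds (tauTildeLimitWeight J a j / (1 + exp a))) := fun j hj => hsum ▸
    tendsto_gpcmPi_of_tendsto_exp
      (fun k hk => tendsto_exp_sum_mul_sub_tauTilde hJ (mul_pos (hα 1) (hα J)) hk)
      (by rw [hsum]; positivity) hj
  refine ⟨?_, ?_, fun j hj0 hjJ => ?_⟩
  · simpa [tauTildeLimitWeight, show J ≠ 0 by omega] using hlim J le_rfl
  · simpa [tauTildeLimitWeight] using hlim 0 (Nat.zero_le J)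
  · simpa [tauTildeLimitWeight, hj0.ne', hjJ.ne] using hlim j hjJ.le
end

section
/- With τ̃(c) = (α_J c, 0, ..., 0, −α_1 c) and θ = 0, the limiting probabilities as c → ∞ satisfy π_J → 1/2 and π_0 → 1/2. -/
open Real Filter Finset

lemma sum_mid (J : ℕ) (hJ : 2 ≤ J) (α : ℕ → ℝ) (c : ℝ) (j : ℕ) (h1 : 1 ≤ j) (h2 : j < J) :
    ∑ s ∈ Finset.Icc 1 j, α s * (0 - tauTilde J α c s) = -(α 1 * (α J * c)) := by
  rw [Finset.sum_eq_single_of_mem 1 (by simp [h1])]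
  · simp [tauTilde, (by omega : (1:ℕ) ≠ J)]
  · intro s hs hne
    simp only [Finset.mem_Icc] at hs
    have : s ≠ J := by omega
    simp [tauTilde, hne, this]

lemma sum_top (J : ℕ) (hJ : 2 ≤ J) (α : ℕ → ℝ) (c : ℝ) :
    ∑ s ∈ Finset.Icc 1 J, α s * (0 - tauTilde J α c s) = 0 := by
  obtain ⟨m, rfl⟩ : ∃ m, J = m + 1 := ⟨J - 1, by omega⟩
  rw [Finset.sum_Icc_succ_top (by omega)]
  rw [sum_mid (m+1) hJ α c m (by omega) (by omega)]
  simp only [tauTilde]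
  rw [if_neg (by omega)]
  norm_num
  ring

lemma denom_eq (J : ℕ) (hJ : 2 ≤ J) (α : ℕ → ℝ) (c : ℝ) :
    ∑ k ∈ Finset.Icc 0 J, Real.exp (∑ s ∈ Finset.Icc 1 k, α s * (0 - tauTilde J α c s))
      = 2 + (J - 1 : ℕ) * Real.exp (-(α 1 * (α J * c))) := by
  have hsplit : Finset.Icc 0 J = insert 0 (Finset.Icc 1 J) := by
    ext x; simp; omega
  rw [hsplit, Finset.sum_insert (by simp)]
  obtain ⟨m, rfl⟩ : ∃ m, J = m + 1 := ⟨J - 1, by omega⟩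
  rw [Finset.sum_Icc_succ_top (by omega)]
  rw [sum_top (m+1) hJ α c]
  have : ∀ k ∈ Finset.Icc 1 m,
      Real.exp (∑ s ∈ Finset.Icc 1 k, α s * (0 - tauTilde (m+1) α c s))
        = Real.exp (-(α 1 * (α (m+1) * c))) := by
    intro k hk
    simp only [Finset.mem_Icc] at hk
    rw [sum_mid (m+1) hJ α c k hk.1 (by omega)]
  rw [Finset.sum_congr rfl this, Finset.sum_const, Nat.card_Icc]
  simp
  ring

/-- With `τ̃(c) = (α_J c, 0, ..., 0, −α_1 c)` and `θ = 0`, the limiting probabilities as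
`c → ∞` satisfy `π_J → 1/2` and `π_0 → 1/2`. -/
theorem gpcm_tauTilde_limits_at_zero (J : ℕ) (hJ : 2 ≤ J) (α : ℕ → ℝ)
    (hα : ∀ s, 0 < α s) :
    Tendsto (fun c => gpcmPi J α (tauTilde J α c) 0 J) atTop (nhds (1 / 2))
    ∧ Tendsto (fun c => gpcmPi J α (tauTilde J α c) 0 0) atTop (nhds (1 / 2)) := by
  have ha : 0 < α 1 * α J := mul_pos (hα 1) (hα J)
  have hexp : Tendsto (fun c : ℝ => Real.exp (-(α 1 * (α J * c)))) atTop (nhds 0) := by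
    have h1 : Tendsto (fun c : ℝ => (α 1 * α J) * c) atTop atTop :=
      Tendsto.const_mul_atTop ha tendsto_id
    have := Real.tendsto_exp_neg_atTop_nhds_zero.comp h1
    convert this using 2 with c
    simp [Function.comp]; ring_nf
  have hden : Tendsto (fun c : ℝ =>
      2 + (J - 1 : ℕ) * Real.exp (-(α 1 * (α J * c)))) atTop (nhds 2) := by
    have := (tendsto_const_nhds (x := ((J - 1 : ℕ) : ℝ)) (f := atTop)).mul hexp
    simpa using tendsto_const_nhds.add this
  have key : Tendsto (fun c : ℝ =>
      1 / (2 + (J - 1 : ℕ) * Real.exp (-(α 1 * (α J * c))))) atTop (nhds (1/2)) := by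
    simpa [one_div] using hden.inv₀ (by norm_num)
  constructor
  · have : ∀ c : ℝ, gpcmPi J α (tauTilde J α c) 0 J
        = 1 / (2 + (J - 1 : ℕ) * Real.exp (-(α 1 * (α J * c)))) := by
      intro c
      unfold gpcmPi
      rw [denom_eq J hJ α c, sum_top J hJ α c, Real.exp_zero]
    simpa [this] using key
  · have : ∀ c : ℝ, gpcmPi J α (tauTilde J α c) 0 0
        = 1 / (2 + (J - 1 : ℕ) * Real.exp (-(α 1 * (α J * c)))) := by
      intro c
      unfold gpcmPi
      rw [denom_eq J hJ α c]
      simp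
    simpa [this] using key
end

section
/- Suppose α ∈ ℝ_+^J satisfies α_k = α_{J−k+1} for all k ∈ {1,...,J}, and τ ∈ ℝ^J satisfies α_k τ_k = −α_{J−k+1} τ_{J−k+1} for all k ∈ {1,...,J}. Then the GPCM probabilities satisfy π_j(θ, τ, α) = π_{J−j}(−θ, τ, α) for all θ ∈ ℝ and all j ∈ {0,...,J}. -/
/-!
Write `S_θ(k) = ∑_{s ≤ k} α_s (θ - τ_s)` for the exponent of category `k`. The symmetry of `α` and
`τ` pairs the `s`-th term at `-θ` with the negated `(J - s + 1)`-th term at `θ`, so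
`S_{-θ}(k) = S_θ(J - k) - S_θ(J)`. Hence the exponents at `-θ`, read in reverse order, are those
at `θ` shifted by the constant `-S_θ(J)`, and a softmax is invariant under such a shift.
-/

open Real Finset

theorem Finset.sum_Icc_zero_reflect {M : Type*} [AddCommMonoid M] (f : ℕ → M) (n : ℕ) :
    ∑ k ∈ Icc 0 n, f (n - k) = ∑ k ∈ Icc 0 n, f k := by
  simpa [← Nat.range_succ_eq_Icc_zero] using sum_range_reflect f (n + 1)

theorem exp_sub_div_sum_exp_sub {ι : Type*} (s : Finset ι) (x : ι → ℝ) (c : ℝ) (i : ι) :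
    exp (x i - c) / ∑ k ∈ s, exp (x k - c) = exp (x i) / ∑ k ∈ s, exp (x k) := by
  simp_rw [exp_sub, ← sum_div]
  exact div_div_div_cancel_right₀ (exp_pos c).ne' _ _

noncomputable def gpcmExponent (α τ : ℕ → ℝ) (θ : ℝ) (k : ℕ) : ℝ :=
  ∑ s ∈ Icc 1 k, α s * (θ - τ s)

theorem gpcmPi_eq (J : ℕ) (α τ : ℕ → ℝ) (θ : ℝ) (j : ℕ) :
    gpcmPi J α τ θ j =
      exp (gpcmExponent α τ θ j) / ∑ k ∈ Icc 0 J, exp (gpcmExponent α τ θ k) :=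
  rfl

theorem gpcmExponent_succ (α τ : ℕ → ℝ) (θ : ℝ) (k : ℕ) :
    gpcmExponent α τ θ (k + 1) = gpcmExponent α τ θ k + α (k + 1) * (θ - τ (k + 1)) :=
  sum_Icc_succ_top (Nat.le_add_left 1 k) _

theorem gpcmExponent_neg (J : ℕ) (α τ : ℕ → ℝ)
    (hsymα : ∀ k, 1 ≤ k → k ≤ J → α k = α (J - k + 1))
    (hsymτ : ∀ k, 1 ≤ k → k ≤ J → α k * τ k = -(α (J - k + 1) * τ (J - k + 1)))
    (θ : ℝ) {k : ℕ} (hk : k ≤ J) :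
    gpcmExponent α τ (-θ) k = gpcmExponent α τ θ (J - k) - gpcmExponent α τ θ J := by
  induction k with
  | zero => simp [gpcmExponent]
  | succ k ih =>
    obtain ⟨m, hm⟩ : ∃ m, J - k = m + 1 := ⟨J - k - 1, by omega⟩
    have hJk : J - (k + 1) = m := by omega
    have hα := hsymα (k + 1) (by omega) hk
    have hτ := hsymτ (k + 1) (by omega) hk
    rw [hJk] at hα hτ
    rw [gpcmExponent_succ, ih (by omega), hJk, hm, gpcmExponent_succ]
    linear_combination -θ * hα - hτ

theorem gpcm_symmetry_general (J : ℕ) (α τ : ℕ → ℝ)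
    (hsymα : ∀ k, 1 ≤ k → k ≤ J → α k = α (J - k + 1))
    (hsymτ : ∀ k, 1 ≤ k → k ≤ J → α k * τ k = -(α (J - k + 1) * τ (J - k + 1))) :
    ∀ θ : ℝ, ∀ j, j ≤ J → gpcmPi J α τ θ j = gpcmPi J α τ (-θ) (J - j) := by
  intro θ j hj
  have hneg := fun k (hk : k ≤ J) => gpcmExponent_neg J α τ hsymα hsymτ θ hk
  have hden : ∑ k ∈ Icc 0 J, exp (gpcmExponent α τ (-θ) k) =
      ∑ k ∈ Icc 0 J, exp (gpcmExponent α τ θ k - gpcmExponent α τ θ J) := by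
    rw [← sum_Icc_zero_reflect (fun k => exp (gpcmExponent α τ θ k - gpcmExponent α τ θ J))]
    exact sum_congr rfl fun k hk => by rw [hneg k (mem_Icc.1 hk).2]
  rw [gpcmPi_eq, gpcmPi_eq, hden, hneg _ (Nat.sub_le J j), Nat.sub_sub_self hj,
    exp_sub_div_sum_exp_sub]

/-- Under the symmetry conditions `α_k = α_{J−k+1}` and `α_k τ_k = −α_{J−k+1} τ_{J−k+1}`,
the GPCM probabilities satisfy `π_j(θ) = π_{J−j}(−θ)`. -/
theorem gpcm_symmetry (J : ℕ) (hJ : 1 ≤ J) (α τ : ℕ → ℝ) (hα : ∀ s, 0 < α s)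
    (hsymα : ∀ k, 1 ≤ k → k ≤ J → α k = α (J - k + 1))
    (hsymτ : ∀ k, 1 ≤ k → k ≤ J → α k * τ k = -(α (J - k + 1) * τ (J - k + 1))) :
    ∀ θ : ℝ, ∀ j, j ≤ J → gpcmPi J α τ θ j = gpcmPi J α τ (-θ) (J - j) :=
  gpcm_symmetry_general J α τ hsymα hsymτ
end

section
/- Let Π be a probability density on ℝ symmetric about 0 with finite first moment, and define g(α) = α·∫ θ·exp(αθ)/(1+exp(αθ))·Π(θ) dθ for α > 0. Then g is continuous, strictly increasing, g(α) → 0 as α → 0⁺, and g(α) → ∞ as α → ∞; hence there exists a unique α*₀ > 0 with g(α*₀) = 1, provided Π is not degenerate at 0. -/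
open Real MeasureTheory Filter

noncomputable def p1 (α θ : ℝ) : ℝ := Real.exp (α * θ) / (1 + Real.exp (α * θ))

open Set Function Topology

/-!
Since `Π` is even, `∫ θ Π(θ) dθ = 0`, so subtracting `1/2` from `π₁` gives `g(α) = α F(α)` with
`F(α) = ∫ (σ(αθ) - 1/2) θ Π(θ) dθ`, `σ` the logistic sigmoid. The integrand of `F` is
nonnegative and nondecreasing in `α ≥ 0`, strictly positive wherever `θ Π(θ) ≠ 0` once `α > 0`,
and dominated by `|θ| Π(θ)`. Hence `F` is continuous, monotone and positive on `(0, ∞)`, so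
`α F(α)` is continuous, vanishes at `0`, is strictly increasing and grows at least linearly;
the intermediate value theorem then gives the unique root of `g = 1`.
-/

lemma p1_eq_sigmoid (a θ : ℝ) : p1 a θ = sigmoid (a * θ) := by
  rw [p1, sigmoid_def, exp_neg, div_eq_iff (by positivity)]
  field_simp
  ring

lemma abs_sigmoid_sub_half_le (x : ℝ) : |sigmoid x - 2⁻¹| ≤ 2⁻¹ := by
  rw [abs_le]
  constructor <;> linarith [sigmoid_nonneg x, sigmoid_le_one x]

lemma monotoneOn_sigmoid_mul_sub_half_mul (θ : ℝ) :
    MonotoneOn (fun a => (sigmoid (a * θ) - 2⁻¹) * θ) (Ici 0) := by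
  intro a ha b _ hab
  rcases le_total 0 θ with hθ | hθ
  · exact mul_le_mul_of_nonneg_right
      (sub_le_sub_right (sigmoid_le (mul_le_mul_of_nonneg_right hab hθ)) _) hθ
  · exact mul_le_mul_of_nonpos_right
      (sub_le_sub_right (sigmoid_le (mul_le_mul_of_nonpos_right hab hθ)) _) hθ

lemma sigmoid_mul_sub_half_mul_nonneg {a : ℝ} (ha : 0 ≤ a) (θ : ℝ) :
    0 ≤ (sigmoid (a * θ) - 2⁻¹) * θ := by
  simpa [sigmoid_zero] using monotoneOn_sigmoid_mul_sub_half_mul θ self_mem_Ici ha ha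

lemma sigmoid_mul_sub_half_mul_pos {a θ : ℝ} (ha : 0 < a) (hθ : θ ≠ 0) :
    0 < (sigmoid (a * θ) - 2⁻¹) * θ := by
  rw [← sigmoid_zero]
  rcases hθ.lt_or_gt with hθ | hθ
  · exact mul_pos_of_neg_of_neg (sub_neg.2 (sigmoid_lt (mul_neg_of_pos_of_neg ha hθ))) hθ
  · exact mul_pos (sub_pos.2 (sigmoid_lt (mul_pos ha hθ))) hθ

lemma integrable_id_mul_of_integrable_abs_mul {μ : Measure ℝ} {w : ℝ → ℝ}
    (h : Integrable (fun θ => |θ| * w θ) μ) : Integrable (fun θ => θ * w θ) μ := by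
  -- `θ * w θ = θ / |θ| * (|θ| * w θ)` holds also at `θ = 0`, where `θ / |θ| = 0`.
  refine (h.bdd_mul (f := fun θ => θ / |θ|) (c := 1)
    (measurable_id.div measurable_abs).aestronglyMeasurable
    (ae_of_all _ fun θ => ?_)).congr (ae_of_all _ fun θ => ?_)
  · rw [norm_div, norm_abs_eq_norm]
    exact div_self_le_one _
  · rcases eq_or_ne θ 0 with rfl | hθ
    · simp
    · simp only
      rw [← mul_assoc, div_mul_cancel₀ _ (abs_ne_zero.2 hθ)]

lemma integral_id_mul_eq_zero_of_even {μ : Measure ℝ} [μ.IsNegInvariant] {w : ℝ → ℝ}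
    (hw : ∀ θ, w (-θ) = w θ) : ∫ θ, θ * w θ ∂μ = 0 := by
  have h := integral_neg_eq_self (fun θ => θ * w θ) μ
  simp only [hw, neg_mul, integral_neg] at h
  linarith

lemma measure_support_id_mul_pos {μ : Measure ℝ} {w : ℝ → ℝ} {ε : ℝ} (hε : 0 < ε)
    (h : 0 < ∫ θ in {x | ε ≤ |x|}, w θ ∂μ) : 0 < μ (support fun θ => θ * w θ) := by
  refine pos_iff_ne_zero.2 fun hnull => h.ne' (setIntegral_eq_zero_of_ae_eq_zero ?_)
  filter_upwards [measure_eq_zero_iff_ae_notMem.1 hnull] with θ hθ hθε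
  have hθ0 : θ ≠ 0 := by
    rintro rfl
    simp only [abs_zero] at hθε
    linarith
  simpa [hθ0] using hθ

noncomputable def centeredMoment (μ : Measure ℝ) (w : ℝ → ℝ) (a : ℝ) : ℝ :=
  ∫ θ, (sigmoid (a * θ) - 2⁻¹) * θ * w θ ∂μ

section centeredMoment

variable {μ : Measure ℝ} {w : ℝ → ℝ}

lemma integrable_sigmoid_mul_sub_mul (hw : Integrable (fun θ => θ * w θ) μ) (a c : ℝ) :
    Integrable (fun θ => (sigmoid (a * θ) - c) * θ * w θ) μ := by
  simp_rw [mul_assoc]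
  exact hw.bdd_mul (c := 1 + |c|) (by fun_prop) (ae_of_all _ fun θ => by
    grw [norm_sub_le, Real.norm_eq_abs, Real.norm_eq_abs, abs_of_nonneg (sigmoid_nonneg _),
      sigmoid_le_one])

lemma integral_id_mul_p1_mul [μ.IsNegInvariant] (hw : Integrable (fun θ => θ * w θ) μ)
    (hsym : ∀ θ, w (-θ) = w θ) (a : ℝ) :
    ∫ θ, θ * p1 a θ * w θ ∂μ = centeredMoment μ w a := by
  have hsplit : (fun θ => θ * p1 a θ * w θ)
      = fun θ => (sigmoid (a * θ) - 2⁻¹) * θ * w θ + 2⁻¹ * (θ * w θ) := by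
    funext θ
    rw [p1_eq_sigmoid]
    ring
  rw [hsplit, integral_add (integrable_sigmoid_mul_sub_mul hw a _) (hw.const_mul _),
    integral_const_mul, integral_id_mul_eq_zero_of_even hsym, mul_zero, add_zero,
    centeredMoment]

lemma continuous_centeredMoment (hw : Integrable (fun θ => θ * w θ) μ) :
    Continuous (centeredMoment μ w) := by
  refine continuous_of_dominated (fun a => (integrable_sigmoid_mul_sub_mul hw a _).1)
    (fun a => ae_of_all _ fun θ => ?_) hw.norm (ae_of_all _ fun θ => by fun_prop)
  rw [mul_assoc, norm_mul]
  grw [Real.norm_eq_abs (_ - _), abs_sigmoid_sub_half_le]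
  linarith [norm_nonneg (θ * w θ)]

lemma monotoneOn_centeredMoment (hw : Integrable (fun θ => θ * w θ) μ) (hnn : ∀ θ, 0 ≤ w θ) :
    MonotoneOn (centeredMoment μ w) (Ici 0) := fun a ha b hb hab =>
  integral_mono (integrable_sigmoid_mul_sub_mul hw a _) (integrable_sigmoid_mul_sub_mul hw b _)
    fun θ => mul_le_mul_of_nonneg_right
      (monotoneOn_sigmoid_mul_sub_half_mul θ ha hb hab) (hnn θ)

lemma centeredMoment_pos (hw : Integrable (fun θ => θ * w θ) μ) (hnn : ∀ θ, 0 ≤ w θ)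
    (hsupp : 0 < μ (support fun θ => θ * w θ)) {a : ℝ} (ha : 0 < a) :
    0 < centeredMoment μ w a := by
  refine (integral_pos_iff_support_of_nonneg
    (fun θ => mul_nonneg (sigmoid_mul_sub_half_mul_nonneg ha.le θ) (hnn θ))
    (integrable_sigmoid_mul_sub_mul hw a _)).2 (hsupp.trans_le (measure_mono fun θ hθ => ?_))
  have hθ : θ ≠ 0 ∧ w θ ≠ 0 := mul_ne_zero_iff.1 hθ
  exact mul_ne_zero (sigmoid_mul_sub_half_mul_pos ha hθ.1).ne' hθ.2

end centeredMoment

section ScaledByArgument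

variable {F : ℝ → ℝ}

lemma strictMonoOn_id_mul_of_monotoneOn (hF : MonotoneOn F (Ici 0))
    (hpos : ∀ a, 0 < a → 0 < F a) : StrictMonoOn (fun a => a * F a) (Ioi 0) :=
  fun a ha b hb hab => calc
    a * F a ≤ a * F b := mul_le_mul_of_nonneg_left (hF (mem_Ici_of_Ioi ha) (mem_Ici_of_Ioi hb)
      hab.le) (le_of_lt ha)
    _ < b * F b := mul_lt_mul_of_pos_right hab (hpos b hb)

lemma tendsto_id_mul_atTop_of_monotoneOn (hF : MonotoneOn F (Ici 0)) {b : ℝ} (hb : 0 ≤ b)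
    (hFb : 0 < F b) : Tendsto (fun a => a * F a) atTop atTop := by
  refine tendsto_atTop_mono' atTop ?_ (tendsto_id.atTop_mul_const hFb)
  filter_upwards [eventually_ge_atTop b] with a hba
  exact mul_le_mul_of_nonneg_left (hF hb (hb.trans hba) hba) (hb.trans hba)

end ScaledByArgument

lemma existsUnique_eq_of_strictMonoOn_Ioi {g : ℝ → ℝ} (hcont : ContinuousOn g (Ioi 0))
    (hmono : StrictMonoOn g (Ioi 0)) (h0 : Tendsto g (𝓝[>] 0) (𝓝 0))
    (htop : Tendsto g atTop atTop) {c : ℝ} (hc : 0 < c) : ∃! a, 0 < a ∧ g a = c := by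
  obtain ⟨a₀, hga₀, ha₀⟩ := ((h0.eventually_lt_const hc).and self_mem_nhdsWithin).exists
  obtain ⟨a₁, ha₀₁, hga₁⟩ := ((eventually_gt_atTop a₀).and (htop.eventually_gt_atTop c)).exists
  obtain ⟨a, ⟨ha₀a, -⟩, hga⟩ := intermediate_value_Icc ha₀₁.le
    (hcont.mono (Icc_subset_Ioi_iff ha₀₁.le |>.2 ha₀)) ⟨hga₀.le, hga₁.le⟩
  have ha : a ∈ Ioi 0 := lt_of_lt_of_le ha₀ ha₀a
  exact ⟨a, ⟨ha, hga⟩, fun b ⟨hb, hgb⟩ => hmono.injOn hb ha (hgb.trans hga.symm)⟩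

theorem twoPL_optimal_alpha_psi0_general (w : ℝ → ℝ) (hnn : ∀ θ, 0 ≤ w θ)
    (hsym : ∀ θ, w (-θ) = w θ)
    (hInt : ∀ a : ℝ, Integrable (fun θ => |θ| * Real.exp (a * |θ|) * w θ))
    (hnondeg : ∃ ε > (0 : ℝ), 0 < ∫ θ in {x : ℝ | ε ≤ |x|}, w θ) :
    ∀ g : ℝ → ℝ, (∀ a, g a = a * ∫ θ, θ * p1 a θ * w θ) →
      ContinuousOn g (Set.Ioi 0)
      ∧ StrictMonoOn g (Set.Ioi 0)
      ∧ Tendsto g (nhdsWithin 0 (Set.Ioi 0)) (nhds 0)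
      ∧ Tendsto g atTop atTop
      ∧ ∃! a : ℝ, 0 < a ∧ g a = 1 := by
  intro g hg
  have hw : Integrable (fun θ => θ * w θ) :=
    integrable_id_mul_of_integrable_abs_mul (by simpa using hInt 0)
  obtain ⟨ε, hε, hmass⟩ := hnondeg
  set F := centeredMoment volume w
  have hpos : ∀ a, 0 < a → 0 < F a :=
    fun a => centeredMoment_pos hw hnn (measure_support_id_mul_pos hε hmass)
  have hmono : MonotoneOn F (Ici 0) := monotoneOn_centeredMoment hw hnn
  obtain rfl : g = fun a => a * F a := funext fun a => by rw [hg, integral_id_mul_p1_mul hw hsym]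
  have hcont : Continuous fun a => a * F a := continuous_id.mul (continuous_centeredMoment hw)
  have h0 : Tendsto (fun a => a * F a) (𝓝[>] 0) (𝓝 0) := by
    simpa using (hcont.tendsto 0).mono_left nhdsWithin_le_nhds
  have htop := tendsto_id_mul_atTop_of_monotoneOn hmono zero_le_one (hpos 1 one_pos)
  have hstrict := strictMonoOn_id_mul_of_monotoneOn hmono hpos
  exact ⟨hcont.continuousOn, hstrict, h0, htop,
    existsUnique_eq_of_strictMonoOn_Ioi hcont.continuousOn hstrict h0 htop one_pos⟩

/-- The function `g(α) = α ∫ θ π₁(θ,α) Π(θ) dθ` is continuous and strictly increasing on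
`(0,∞)`, tends to `0` as `α → 0⁺` and to `∞` as `α → ∞`; hence there is a unique
`α*₀ > 0` with `g(α*₀) = 1`. -/
theorem twoPL_optimal_alpha_psi0 (w : ℝ → ℝ) (hnn : ∀ θ, 0 ≤ w θ)
    (hsym : ∀ θ, w (-θ) = w θ) (hprob : ∫ θ, w θ = 1)
    (hInt : ∀ a : ℝ, Integrable (fun θ => |θ| * Real.exp (a * |θ|) * w θ))
    (hnondeg : ∃ ε > (0 : ℝ), 0 < ∫ θ in {x : ℝ | ε ≤ |x|}, w θ) :
    ∀ g : ℝ → ℝ, (∀ a, g a = a * ∫ θ, θ * p1 a θ * w θ) →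
      ContinuousOn g (Set.Ioi 0)
      ∧ StrictMonoOn g (Set.Ioi 0)
      ∧ Tendsto g (nhdsWithin 0 (Set.Ioi 0)) (nhds 0)
      ∧ Tendsto g atTop atTop
      ∧ ∃! a : ℝ, 0 < a ∧ g a = 1 :=
  twoPL_optimal_alpha_psi0_general w hnn hsym hInt hnondeg
end
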